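/- Let L_u : E → ℝ (u = 1, …, U) be differentiable, convex, and L-smooth with minimizer W* of L_u, and let 0 < η ≤ 1/L. Let W_u^(0) = W and W_u^(e+1) = W_u^(e) − η·∇L_u(W_u^(e)) for e = 0, …, E−1. Then ‖W_u^(E) − W*‖² ≤ ‖W − W*‖² − (η/L)·∑_{e=0}^{E−1} ‖∇L_u(W_u^(e))‖². -/

import Mathlib

open scoped RealInnerProductSpace BigOperators

/-!
Convexity and `L`-smoothness make the gradient co-coercive towards the minimizer `x⋆`:
`‖∇f x‖² / L ≤ ⟪∇f x, x - x⋆⟫`. This follows by comparing `f` at `x - ∇f x / L` and at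
`x⋆ + ∇f x / L`, using the descent lemma at `x` and `x⋆` and the supporting hyperplane at `x`.
Expanding the square, co-coercivity makes one gradient step with `η ≤ 1 / L` decrease
`‖x - x⋆‖²` by at least `(η / L) ‖∇f x‖²`, and these decreases add up along the iteration.
-/

open Set
open scoped Gradient

theorem le_add_deriv_add_of_deriv_sub_le {φ φ' : ℝ → ℝ} {M : ℝ}
    (hφ : ∀ t, HasDerivAt φ (φ' t) t) (hφ' : ∀ t ∈ Ico (0 : ℝ) 1, φ' t ≤ φ' 0 + M * t) :
    φ 1 ≤ φ 0 + φ' 0 + M / 2 := by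
  have hB : ∀ t, HasDerivAt (fun s => φ 0 + s * φ' 0 + M / 2 * s ^ 2) (φ' 0 + M * t) t := by
    intro t
    have h := (((hasDerivAt_id' t).mul_const (φ' 0)).const_add (φ 0)).add
      ((hasDerivAt_pow 2 t).const_mul (M / 2))
    exact h.congr_deriv (by push_cast; ring)
  have hbound := image_le_of_deriv_right_le_deriv_boundary (a := 0) (b := 1)
    (fun t _ => (hφ t).continuousAt.continuousWithinAt) (fun t _ => (hφ t).hasDerivWithinAt)
    (by simp) (fun t _ => (hB t).continuousAt.continuousWithinAt)
    (fun t _ => (hB t).hasDerivWithinAt) hφ' (right_mem_Icc.2 zero_le_one)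
  simpa using hbound

section InnerProductSpace

variable {E : Type*} [NormedAddCommGroup E] [InnerProductSpace ℝ E] {L : ℝ}

theorem norm_sub_smul_sub_sq_le {g x xmin : E} {η : ℝ} (hη0 : 0 ≤ η) (hη : η ≤ 1 / L)
    (hcoerc : ‖g‖ ^ 2 / L ≤ ⟪g, x - xmin⟫) :
    ‖x - η • g - xmin‖ ^ 2 ≤ ‖x - xmin‖ ^ 2 - η / L * ‖g‖ ^ 2 := by
  rw [sub_right_comm, norm_sub_sq_real, real_inner_smul_right, norm_smul, Real.norm_of_nonneg hη0,
    mul_pow, real_inner_comm]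
  have hsq : η ^ 2 * ‖g‖ ^ 2 ≤ η / L * ‖g‖ ^ 2 := by
    gcongr
    calc η ^ 2 = η * η := sq η
      _ ≤ η * (1 / L) := by gcongr
      _ = η / L := by ring
  have hinner : η / L * ‖g‖ ^ 2 ≤ η * ⟪g, x - xmin⟫ := by
    rw [div_mul_eq_mul_div, mul_div_assoc]
    exact mul_le_mul_of_nonneg_left hcoerc hη0
  linarith

end InnerProductSpace

section Gradient

variable {E : Type*} [NormedAddCommGroup E] [InnerProductSpace ℝ E] [CompleteSpace E]
  {f : E → ℝ} {x v : E} {L : ℝ}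

theorem DifferentiableAt.hasDerivAt_comp_add_smul {t : ℝ}
    (hf : DifferentiableAt ℝ f (x + t • v)) :
    HasDerivAt (fun s : ℝ => f (x + s • v)) ⟪∇ f (x + t • v), v⟫ t := by
  have hline : HasDerivAt (fun s : ℝ => x + s • v) v t := by
    simpa using ((hasDerivAt_id t).smul_const v).const_add x
  exact hf.hasGradientAt.hasFDerivAt.comp_hasDerivAt t hline

theorem ConvexOn.add_inner_gradient_le (hconv : ConvexOn ℝ univ f) (hf : DifferentiableAt ℝ f x)
    (y : E) : f x + ⟪∇ f x, y - x⟫ ≤ f y := by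
  have hline : ConvexOn ℝ univ (fun s : ℝ => f (x + s • (y - x))) := by
    have hcomp : (fun s : ℝ => f (x + s • (y - x))) = f ∘ AffineMap.lineMap x y := by
      ext s
      simp [AffineMap.lineMap_apply_module', add_comm]
    simpa [hcomp] using hconv.comp_affineMap (AffineMap.lineMap x y)
  have hdiff0 : DifferentiableAt ℝ f (x + (0 : ℝ) • (y - x)) := by simpa using hf
  have hslope := hline.le_slope_of_hasDerivWithinAt (mem_univ 0) (mem_univ 1) one_pos
    hdiff0.hasDerivAt_comp_add_smul.hasDerivWithinAt
  simp only [slope_def_field, zero_smul, add_zero, one_smul, add_sub_cancel, sub_zero,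
    div_one] at hslope
  linarith

theorem le_add_inner_gradient_add_of_lipschitz_gradient (hf : Differentiable ℝ f)
    (hsmooth : ∀ x y : E, ‖∇ f x - ∇ f y‖ ≤ L * ‖x - y‖) (x y : E) :
    f y ≤ f x + ⟪∇ f x, y - x⟫ + L / 2 * ‖y - x‖ ^ 2 := by
  have hφ : ∀ t : ℝ,
      HasDerivAt (fun s : ℝ => f (x + s • (y - x))) ⟪∇ f (x + t • (y - x)), y - x⟫ t :=
    fun t => (hf _).hasDerivAt_comp_add_smul
  have hφ' : ∀ t ∈ Ico (0 : ℝ) 1, ⟪∇ f (x + t • (y - x)), y - x⟫ ≤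
      ⟪∇ f (x + (0 : ℝ) • (y - x)), y - x⟫ + L * ‖y - x‖ ^ 2 * t := by
    intro t ht
    rw [zero_smul, add_zero, ← sub_le_iff_le_add', ← inner_sub_left]
    calc ⟪∇ f (x + t • (y - x)) - ∇ f x, y - x⟫
        ≤ ‖∇ f (x + t • (y - x)) - ∇ f x‖ * ‖y - x‖ := real_inner_le_norm _ _
      _ ≤ L * ‖t • (y - x)‖ * ‖y - x‖ := by
          gcongr; simpa using hsmooth (x + t • (y - x)) x
      _ = L * ‖y - x‖ ^ 2 * t := by
          rw [norm_smul, Real.norm_of_nonneg ht.1]; ring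
  simpa [mul_div_right_comm] using le_add_deriv_add_of_deriv_sub_le hφ hφ'

theorem IsLocalMin.gradient_eq_zero (h : IsLocalMin f x) : ∇ f x = 0 := by
  simp [gradient, h.fderiv_eq_zero]

theorem sq_norm_gradient_div_le_inner_gradient_sub_min (hL : 0 < L) (hf : Differentiable ℝ f)
    (hconv : ConvexOn ℝ univ f) (hsmooth : ∀ x y : E, ‖∇ f x - ∇ f y‖ ≤ L * ‖x - y‖)
    {xmin : E} (hmin : ∀ z, f xmin ≤ f z) (x : E) :
    ‖∇ f x‖ ^ 2 / L ≤ ⟪∇ f x, x - xmin⟫ := by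
  set g := ∇ f x
  have hsq : L / 2 * ‖L⁻¹ • g‖ ^ 2 = ‖g‖ ^ 2 / (2 * L) := by
    rw [norm_smul, Real.norm_of_nonneg (inv_nonneg.2 hL.le)]
    field_simp
  have hhalf : L⁻¹ * ‖g‖ ^ 2 = 2 * (‖g‖ ^ 2 / (2 * L)) := by
    field_simp
  have hgrad_min : ∇ f xmin = 0 := IsLocalMin.gradient_eq_zero (.of_forall hmin)
  have hup : f (xmin + L⁻¹ • g) ≤ f xmin + ‖g‖ ^ 2 / (2 * L) := by
    simpa [hgrad_min, hsq] using
      le_add_inner_gradient_add_of_lipschitz_gradient hf hsmooth xmin (xmin + L⁻¹ • g)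
  have hdown : f (x - L⁻¹ • g) ≤ f x - ‖g‖ ^ 2 / (2 * L) := by
    have h := le_add_inner_gradient_add_of_lipschitz_gradient hf hsmooth x (x - L⁻¹ • g)
    rw [sub_sub_cancel_left, norm_neg, hsq, inner_neg_right, real_inner_smul_right,
      real_inner_self_eq_norm_sq] at h
    linarith
  have hsupport : f x + ⟪g, xmin + L⁻¹ • g - x⟫ ≤ f (xmin + L⁻¹ • g) :=
    hconv.add_inner_gradient_le (hf x) _
  rw [show xmin + L⁻¹ • g - x = L⁻¹ • g - (x - xmin) by abel, inner_sub_right,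
    real_inner_smul_right, real_inner_self_eq_norm_sq] at hsupport
  rw [div_eq_inv_mul]
  linarith [hmin (x - L⁻¹ • g)]

end Gradient

theorem local_gd_multi_step_contraction_general
    {E : Type*} [NormedAddCommGroup E] [InnerProductSpace ℝ E] [CompleteSpace E]
    (Lf : E → ℝ) (L : ℝ)
    (hdiff : Differentiable ℝ Lf)
    (hconv : ConvexOn ℝ Set.univ Lf)
    (hsmooth : ∀ x y : E, ‖gradient Lf x - gradient Lf y‖ ≤ L * ‖x - y‖)
    (Wstar : E) (hmin : ∀ x : E, Lf Wstar ≤ Lf x)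
    (η : ℝ) (hη0 : 0 < η) (hη : η ≤ 1 / L)
    (N : ℕ)
    (W : E) (Wseq : ℕ → E)
    (hW0 : Wseq 0 = W)
    (hstep : ∀ e, Wseq (e + 1) = Wseq e - η • gradient Lf (Wseq e)) :
    ‖Wseq N - Wstar‖ ^ 2 ≤
      ‖W - Wstar‖ ^ 2 - (η / L) * ∑ e ∈ Finset.range N, ‖gradient Lf (Wseq e)‖ ^ 2 := by
  have hL : 0 < L := one_div_pos.mp (hη0.trans_le hη)
  induction N with
  | zero => simp [hW0]
  | succ n ih =>
    have hstep_le := norm_sub_smul_sub_sq_le hη0.le hη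
      (sq_norm_gradient_div_le_inner_gradient_sub_min hL hdiff hconv hsmooth hmin (Wseq n))
    rw [Finset.sum_range_succ, mul_add, hstep n]
    linarith

/-- Per-client multi-step gradient descent contraction: iterating the one-step contraction,
with `Lf` differentiable, convex, `L`-smooth, minimizer `Wstar`, and stepsize `0 < η ≤ 1/L`. -/
theorem local_gd_multi_step_contraction
    {E : Type*} [NormedAddCommGroup E] [InnerProductSpace ℝ E] [CompleteSpace E]
    (Lf : E → ℝ) (L : ℝ) (hL : 0 < L)
    (hdiff : Differentiable ℝ Lf)
    (hconv : ConvexOn ℝ Set.univ Lf)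
    (hsmooth : ∀ x y : E, ‖gradient Lf x - gradient Lf y‖ ≤ L * ‖x - y‖)
    (Wstar : E) (hmin : ∀ x : E, Lf Wstar ≤ Lf x)
    (η : ℝ) (hη0 : 0 < η) (hη : η ≤ 1 / L)
    (N : ℕ)
    (W : E) (Wseq : ℕ → E)
    (hW0 : Wseq 0 = W)
    (hstep : ∀ e, Wseq (e + 1) = Wseq e - η • gradient Lf (Wseq e)) :
    ‖Wseq N - Wstar‖ ^ 2 ≤
      ‖W - Wstar‖ ^ 2 - (η / L) * ∑ e ∈ Finset.range N, ‖gradient Lf (Wseq e)‖ ^ 2 :=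
  local_gd_multi_step_contraction_general Lf L hdiff hconv hsmooth Wstar hmin η hη0 hη N W Wseq hW0
    hstep
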